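/- Let G be a program graph with locations L, let O ⊆ L be a set of observed locations, and let k ∈ ℕ. Then the concretization of the set of observed symbolic traces with k observations equals the set of observed concrete traces with k observations: γ(SymTraces^k_O(G)) = Traces^k_O(G). -/

import Mathlib

open scoped Classical

namespace HyperSE

variable {Val X L V : Type}

/-- Guarded-assignment instructions: deterministic assignment of (the shallow semantics of)
a term to a variable, or a nondeterministic assignment (`havoc`). -/
inductive Instr (Val X : Type) where
  | assign (x : X) (e : (X → Val) → Val)
  | havoc (x : X)

/-- Concrete execution of an instruction on memories. -/
def Instr.exec : Instr Val X → (X → Val) → (X → Val) → Prop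
  | .assign x e, m, m' => m' = Function.update m x (e m)
  | .havoc x, m, m' => ∃ v : Val, m' = Function.update m x v

/-- A program graph: edges between locations, an initial location, and an
instruction (`effect`) and a guard for every edge. -/
structure ProgramGraph (Val X L : Type) where
  edges : L → L → Prop
  init : L
  effect : L → L → Instr Val X
  guard : L → L → (X → Val) → Prop

/-- Execution states: a location together with a memory. -/
abbrev State (Val X L : Type) := L × (X → Val)

/-- The transition relation of a program graph. -/
def ProgramGraph.Step (G : ProgramGraph Val X L) (s₁ s₂ : State Val X L) : Prop :=
  G.edges s₁.1 s₂.1 ∧ G.guard s₁.1 s₂.1 s₁.2 ∧ (G.effect s₁.1 s₂.1).exec s₁.2 s₂.2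

/-- Finite traces: nonempty finite sequences of states starting in the initial state
(initial location together with the fixed initial memory `m₀`) and following `Step`. -/
def FinTraces (m₀ : X → Val) (G : ProgramGraph Val X L) : Set (List (State Val X L)) :=
  { τ | τ.head? = some (G.init, m₀) ∧ τ.Chain' G.Step }

/-- Projection `[σ]_O` of a finite trace onto the observed locations `O`. -/
noncomputable def obs (O : Set L) (σ : List (State Val X L)) : List (State Val X L) :=
  σ.filter fun s => decide (s.1 ∈ O)

/-- `|σ|_O`: the number of observed states of `σ`. -/
noncomputable def obsLen (O : Set L) (σ : List (State Val X L)) : ℕ :=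
  (obs O σ).length

/-- `Traces*_O(G)`: observational projections of the finite traces of `G`. -/
def TracesO (m₀ : X → Val) (G : ProgramGraph Val X L) (O : Set L) :
    Set (List (State Val X L)) :=
  { t | ∃ τ ∈ FinTraces m₀ G, t = obs O τ }

/-- `Traces^k_O(G)`: observational projections of length `k`. -/
def TracesKO (m₀ : X → Val) (G : ProgramGraph Val X L) (O : Set L) (k : ℕ) :
    Set (List (State Val X L)) :=
  { t | t ∈ TracesO m₀ G O ∧ t.length = k }

/-- Infinite traces of a program graph. -/
def InfTraces (m₀ : X → Val) (G : ProgramGraph Val X L) : Set (ℕ → State Val X L) :=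
  { σ | σ 0 = (G.init, m₀) ∧ ∀ i, G.Step (σ i) (σ (i + 1)) }

/-- `t` is the subsequence of `σ` consisting of exactly the states whose location is in `O`
(in particular `σ` has infinitely many observations). -/
def IsObsSubseq (O : Set L) (σ t : ℕ → State Val X L) : Prop :=
  ∃ f : ℕ → ℕ, StrictMono f ∧ (∀ n, t n = σ (f n)) ∧ (∀ n, (σ (f n)).1 ∈ O) ∧
    ∀ i, (σ i).1 ∈ O → ∃ n, f n = i

/-- `Traces^ω_O(G)`: observational projections of the infinite traces of `G` that have
infinitely many observations. -/
def TracesOmegaO (m₀ : X → Val) (G : ProgramGraph Val X L) (O : Set L) :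
    Set (ℕ → State Val X L) :=
  { t | ∃ σ ∈ InfTraces m₀ G, IsObsSubseq O σ t }

/-- OHyperLTL_safe formulas: a prefix of trace quantifiers (each annotated with a program
graph and a set of observed locations), followed by an invariant `□φ`, where the
quantifier-free formula `φ` is represented shallowly by a predicate on valuations of the
indexed variables `x_π`. -/
inductive HForm (Val X L V : Type) where
  | all (G : ProgramGraph Val X L) (O : Set L) (π : V) (ψ : HForm Val X L V)
  | ex (G : ProgramGraph Val X L) (O : Set L) (π : V) (ψ : HForm Val X L V)
  | always (φ : (V → X → Val) → Prop)

/-- The valuation `Pi_i` (with default value `m₀ x` for unbound trace variables). -/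
def memAt (m₀ : X → Val) (Pi : V → List (State Val X L)) (i : ℕ) : V → X → Val :=
  fun π x =>
    match (Pi π)[i]? with
    | some s => s.2 x
    | none => m₀ x

/-- Bounded semantics `Pi ⊨^k ψ`: quantifiers range over observed traces of length
exactly `k`, and the invariant is checked at positions `0 ≤ i < k`.
The empty (partial) trace assignment is modelled by the total map `fun _ => []`. -/
def SatK (m₀ : X → Val) (k : ℕ) :
    HForm Val X L V → (V → List (State Val X L)) → Prop
  | .all G O π ψ, Pi => ∀ σ ∈ TracesKO m₀ G O k, SatK m₀ k ψ (Function.update Pi π σ)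
  | .ex G O π ψ, Pi => ∃ σ ∈ TracesKO m₀ G O k, SatK m₀ k ψ (Function.update Pi π σ)
  | .always φ, Pi => ∀ i < k, φ (memAt m₀ Pi i)

/-- `⊨^k ψ` : satisfaction of `ψ` under the bounded semantics, starting from the empty
trace assignment. -/
def ModelsK (m₀ : X → Val) (k : ℕ) (ψ : HForm Val X L V) : Prop :=
  SatK m₀ k ψ fun _ => []

/-- Upper-bounded semantics `⊨^{≤ n} ψ`. -/
def ModelsUpTo (m₀ : X → Val) (n : ℕ) (ψ : HForm Val X L V) : Prop :=
  ∀ k ≤ n, ModelsK m₀ k ψ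

/-- Infinite-trace semantics `Pi ⊨^ω ψ`. -/
def SatOmega (m₀ : X → Val) :
    HForm Val X L V → (V → (ℕ → State Val X L)) → Prop
  | .all G O π ψ, Pi => ∀ σ ∈ TracesOmegaO m₀ G O, SatOmega m₀ ψ (Function.update Pi π σ)
  | .ex G O π ψ, Pi => ∃ σ ∈ TracesOmegaO m₀ G O, SatOmega m₀ ψ (Function.update Pi π σ)
  | .always φ, Pi => ∀ i : ℕ, φ fun π x => (Pi π i).2 x

/-- `⊨^ω ψ` : satisfaction of `ψ` under the infinite-trace semantics, starting from the
empty trace assignment (modelled by the default environment). -/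
def ModelsOmega [Inhabited L] (m₀ : X → Val) (ψ : HForm Val X L V) : Prop :=
  SatOmega m₀ ψ fun _ _ => (default, m₀)

/-- `G` is infinitely observable w.r.t. `O`: every observed trace with `k` observations is
a (length-`k`) prefix of some infinite observed trace. -/
def ProgramGraph.InfObs (m₀ : X → Val) (G : ProgramGraph Val X L) (O : Set L) : Prop :=
  ∀ k : ℕ, ∀ t ∈ TracesKO m₀ G O k, ∃ t' ∈ TracesOmegaO m₀ G O,
    t = List.ofFn fun i : Fin k => t' i

/-- The list of quantified program graphs (with their observed locations) of a formula. -/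
def HForm.graphs : HForm Val X L V → List (ProgramGraph Val X L × Set L)
  | .all G O _ ψ => (G, O) :: ψ.graphs
  | .ex G O _ ψ => (G, O) :: ψ.graphs
  | .always _ => []

/-- A formula is infinitely observable if all its quantified program graphs are. -/
def HForm.InfObs (m₀ : X → Val) (ψ : HForm Val X L V) : Prop :=
  ∀ p ∈ ψ.graphs, ProgramGraph.InfObs m₀ p.1 p.2

/-- `G` is `(k,O)`-observable: there is a bound `b` such that every finite trace with
exactly `k` observations has a prefix of length `< b` with the same `k` observations. -/
def ProgramGraph.Observable (m₀ : X → Val) (G : ProgramGraph Val X L) (O : Set L)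
    (k : ℕ) : Prop :=
  ∃ b : ℕ, ∀ τ ∈ FinTraces m₀ G, obsLen O τ = k →
    ∃ τ', τ' <+: τ ∧ obsLen O τ' = k ∧ τ'.length < b

/-! ### Symbolic execution

Symbolic variables are drawn from the countably infinite set `V* = ℕ` (one disjoint bank
of symbolic variables per trace variable is used when evaluating symbolic encodings of
formulas). Symbolic terms and path formulas are represented shallowly as functions of
assignments `ρ : ℕ → Val`. Fresh variables are chosen by a fixed deterministic scheme:
the symbolic state carries a counter of the used variables. -/

/-- A symbolic state: a location, a path formula, a symbolic memory and the counter of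
the fresh-variable scheme. -/
structure SymState (Val X L : Type) where
  loc : L
  path : (ℕ → Val) → Prop
  smem : X → (ℕ → Val) → Val
  ctr : ℕ

/-- Symbolic execution of an instruction on (symbolic memory, fresh counter) pairs. -/
def Instr.symExec : Instr Val X →
    ((X → (ℕ → Val) → Val) × ℕ) → ((X → (ℕ → Val) → Val) × ℕ) → Prop
  | .assign x e, p, p' =>
      p'.2 = p.2 ∧ p'.1 = Function.update p.1 x fun ρ => e fun y => p.1 y ρ
  | .havoc x, p, p' =>
      p'.2 = p.2 + 1 ∧ p'.1 = Function.update p.1 x fun ρ => ρ p.2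

/-- The symbolic transition relation: follow an edge, conjoin the (substituted) guard to
the path formula, require satisfiability, and symbolically execute the effect. -/
def ProgramGraph.SymStep (G : ProgramGraph Val X L) (s₁ s₂ : SymState Val X L) : Prop :=
  G.edges s₁.loc s₂.loc ∧
  s₂.path = (fun ρ => s₁.path ρ ∧ G.guard s₁.loc s₂.loc fun x => s₁.smem x ρ) ∧
  (∃ ρ, s₂.path ρ) ∧
  (G.effect s₁.loc s₂.loc).symExec (s₁.smem, s₁.ctr) (s₂.smem, s₂.ctr)

/-- The initial symbolic state `⟨ℓ₀, true, m̂₀⟩` (with `m̂₀` evaluating to `m₀`). -/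
def initSym (m₀ : X → Val) (G : ProgramGraph Val X L) : SymState Val X L :=
  ⟨G.init, fun _ => True, fun x _ => m₀ x, 0⟩

/-- `SymTraces*(G)`. -/
def SymTraces (m₀ : X → Val) (G : ProgramGraph Val X L) : Set (List (SymState Val X L)) :=
  { τ | τ.head? = some (initSym m₀ G) ∧ τ.Chain' G.SymStep }

/-- Projection of a symbolic trace onto observed locations. -/
noncomputable def obsSym (O : Set L) (τ : List (SymState Val X L)) :
    List (SymState Val X L) :=
  τ.filter fun s => decide (s.loc ∈ O)

/-- `SymTraces*_O(G)`. -/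
def SymTracesO (m₀ : X → Val) (G : ProgramGraph Val X L) (O : Set L) :
    Set (List (SymState Val X L)) :=
  { t | ∃ τ ∈ SymTraces m₀ G, t = obsSym O τ }

/-- `SymTraces^k_O(G)`. -/
def SymTracesKO (m₀ : X → Val) (G : ProgramGraph Val X L) (O : Set L) (k : ℕ) :
    Set (List (SymState Val X L)) :=
  { t | t ∈ SymTracesO m₀ G O ∧ t.length = k }

/-- `path(τ̂)`: the accumulated path formula of a symbolic trace (the path formula of its
last state). -/
def pathOf (τ : List (SymState Val X L)) : (ℕ → Val) → Prop :=
  match τ.getLast? with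
  | some s => s.path
  | none => fun _ => True

/-- The fresh-variable counter of (the last state of) a symbolic trace; the free symbolic
variables of the trace are exactly the variables below this counter. -/
def ctrOf (τ : List (SymState Val X L)) : ℕ :=
  match τ.getLast? with
  | some s => s.ctr
  | none => 0

/-- Concretization `γ_ρ(τ̂)` of a symbolic trace under an assignment `ρ` of the symbolic
variables. -/
def conc (ρ : ℕ → Val) (τ : List (SymState Val X L)) : List (State Val X L) :=
  τ.map fun s => (s.loc, fun x => s.smem x ρ)

/-- Concretization `γ(T)` of a set of symbolic traces:
`γ(T) = ⋃_{τ̂ ∈ T} { γ_ρ(τ̂) | ρ ⊨ path(τ̂) }`. -/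
def concSet (T : Set (List (SymState Val X L))) : Set (List (State Val X L)) :=
  { τ | ∃ t ∈ T, ∃ ρ, pathOf t ρ ∧ τ = conc ρ t }

/-- `ψ` is `k`-encodable: `SymTraces^k_O(G)` is finite for every quantified program. -/
def HForm.EncodableAt (m₀ : X → Val) (k : ℕ) (ψ : HForm Val X L V) : Prop :=
  ∀ p ∈ ψ.graphs, (SymTracesKO m₀ p.1 p.2 k).Finite

/-- `ρ'` agrees with `ρ` except possibly on the symbolic variables of the bank of the
trace variable `π` below the counter `c` (i.e. except on `FV` of the trace bound to `π`). -/
def AgreesExc (π : V) (c : ℕ) (ρ ρ' : V → ℕ → Val) : Prop :=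
  ∀ π' n, (π' ≠ π ∨ c ≤ n) → ρ' π' n = ρ π' n

/-- The symbolic valuation `Pî_i` (with default value `m₀ x` for unbound trace variables). -/
def smemAt (m₀ : X → Val) (Pih : V → List (SymState Val X L)) (ρ : V → ℕ → Val) (i : ℕ) :
    V → X → Val :=
  fun π x =>
    match (Pih π)[i]? with
    | some s => s.smem x (ρ π)
    | none => m₀ x

/-- The symbolic encoding `⟦ψ⟧^k_Pî` of the bounded semantics, as a (shallow) first-order
formula over the symbolic variables (one bank `ρ π : ℕ → Val` per trace variable `π`):
universal quantification becomes a conjunction over all symbolic traces (universally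
quantifying their free variables, guarded by the path condition), existential
quantification becomes a disjunction (existentially quantifying the free variables,
conjoined with the path condition), and `□φ` becomes the conjunction of the instances of
`φ` at positions `0 ≤ i < k`. -/
def Enc (m₀ : X → Val) (k : ℕ) :
    HForm Val X L V → (V → List (SymState Val X L)) → (V → ℕ → Val) → Prop
  | .all G O π ψ, Pih, ρ =>
      ∀ t ∈ SymTracesKO m₀ G O k, ∀ ρ', AgreesExc π (ctrOf t) ρ ρ' →
        pathOf t (ρ' π) → Enc m₀ k ψ (Function.update Pih π t) ρ'
  | .ex G O π ψ, Pih, ρ =>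
      ∃ t ∈ SymTracesKO m₀ G O k, ∃ ρ', AgreesExc π (ctrOf t) ρ ρ' ∧
        pathOf t (ρ' π) ∧ Enc m₀ k ψ (Function.update Pih π t) ρ'
  | .always φ, Pih, ρ => ∀ i < k, φ (smemAt m₀ Pih ρ i)

/-- `Pi ≃_ρ Pî`: the concrete trace assignment `Pi` is the concretization of the symbolic
trace assignment `Pî` under `ρ` (and `ρ` satisfies all corresponding path conditions). -/
def SimRho (ρ : V → ℕ → Val) (Pi : V → List (State Val X L))
    (Pih : V → List (SymState Val X L)) : Prop :=
  ∀ π, pathOf (Pih π) (ρ π) ∧ Pi π = conc (ρ π) (Pih π)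

end HyperSE

namespace HyperSE

section Aux

variable {Val X L : Type}

/-- A symbolic state is supported below `c`: its memory and path formula only depend on
symbolic variables below `c`. -/
private def Supp (c : ℕ) (s : SymState Val X L) : Prop :=
  ∀ ρ₁ ρ₂ : ℕ → Val, (∀ n < c, ρ₁ n = ρ₂ n) →
    (∀ x, s.smem x ρ₁ = s.smem x ρ₂) ∧ (s.path ρ₁ ↔ s.path ρ₂)

private lemma update_pt (m : X → (ℕ → Val) → Val) (x : X) (g : (ℕ → Val) → Val)
    (ρ : ℕ → Val) :
    (fun y => Function.update m x g y ρ) = Function.update (fun y => m y ρ) x (g ρ) := by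
  funext y
  simp only [Function.update]
  by_cases h : y = x <;> simp [h]

private lemma exec_of_symExec {ι : Instr Val X} {m m' : X → (ℕ → Val) → Val} {c c' : ℕ}
    (ρ : ℕ → Val) (h : ι.symExec (m, c) (m', c')) :
    ι.exec (fun x => m x ρ) (fun x => m' x ρ) := by
  cases ι with
  | assign x e =>
      obtain ⟨-, h2⟩ := h
      replace h2 : m' = Function.update m x fun ρ => e fun y => m y ρ := h2
      show _ = _
      rw [h2, update_pt]
  | havoc x =>
      obtain ⟨-, h2⟩ := h
      replace h2 : m' = Function.update m x fun ρ => ρ c := h2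
      exact ⟨ρ c, by rw [h2, update_pt]⟩

private lemma conc_append (ρ : ℕ → Val) (l₁ l₂ : List (SymState Val X L)) :
    conc ρ (l₁ ++ l₂) = conc ρ l₁ ++ conc ρ l₂ := List.map_append

private lemma sound_chain (G : ProgramGraph Val X L) (ρ : ℕ → Val) :
    ∀ τ : List (SymState Val X L), τ.Chain' G.SymStep → pathOf τ ρ →
      (conc ρ τ).Chain' G.Step ∧ ∀ s ∈ τ, s.path ρ := by
  intro τ
  induction τ using List.reverseRecOn with
  | nil => intro _ _; exact ⟨List.isChain_nil, by simp⟩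
  | append_singleton l a ih =>
      intro hch hpa
      simp only [pathOf, List.getLast?_concat] at hpa
      rcases l.eq_nil_or_concat' with rfl | ⟨l', b, rfl⟩
      · refine ⟨by simp [conc, List.Chain', List.isChain_singleton], ?_⟩
        intro s hs
        simp only [List.nil_append, List.mem_singleton] at hs
        subst hs; exact hpa
      · unfold List.Chain' at hch; rw [List.isChain_append] at hch
        obtain ⟨hch1, -, hlink⟩ := hch
        have hstep : G.SymStep b a := by
          apply hlink b _ a
          · simp [List.getLast?_concat]
          · simp
        have hpb : b.path ρ ∧ G.guard b.loc a.loc (fun x => b.smem x ρ) := by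
          have := hstep.2.1
          rw [this] at hpa
          exact hpa
        have ihres := ih hch1 (by simp only [pathOf, List.getLast?_concat]; exact hpb.1)
        constructor
        · unfold List.Chain'; rw [conc_append, List.isChain_append]
          refine ⟨ihres.1, List.isChain_singleton _, ?_⟩
          intro x hx y hy
          simp only [conc, List.map_append, List.map_cons, List.map_nil,
            List.getLast?_concat, List.head?_cons, Option.mem_def,
            Option.some.injEq] at hx hy
          subst hx; subst hy
          refine ⟨hstep.1, hpb.2, ?_⟩
          exact exec_of_symExec ρ hstep.2.2.2
        · intro s hs
          rw [List.mem_append, List.mem_singleton] at hs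
          rcases hs with hs | rfl
          · exact ihres.2 s hs
          · exact hpa


private lemma obs_conc (O : Set L) (ρ : ℕ → Val) (τ : List (SymState Val X L)) :
    obs O (conc ρ τ) = conc ρ (obsSym O τ) := by
  induction τ with
  | nil => rfl
  | cons a l ih =>
      simp only [conc, obs, obsSym, List.map_cons, List.filter_cons] at *
      by_cases h : a.loc ∈ O <;> simp [h, ih]

private lemma conc_length (ρ : ℕ → Val) (τ : List (SymState Val X L)) :
    (conc ρ τ).length = τ.length := List.length_map _

private lemma truncate (G : ProgramGraph Val X L) (m₀ : X → Val) (O : Set L) (ρ : ℕ → Val) :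
    ∀ τ : List (SymState Val X L), τ.head? = some (initSym m₀ G) → τ.Chain' G.SymStep →
      pathOf (obsSym O τ) ρ →
      ∃ τ', τ'.head? = some (initSym m₀ G) ∧ τ'.Chain' G.SymStep ∧
        obsSym O τ' = obsSym O τ ∧ pathOf τ' ρ := by
  intro τ
  induction τ using List.reverseRecOn with
  | nil => intro h; simp at h
  | append_singleton l a ih =>
      intro hhead hch hpath
      by_cases ha : a.loc ∈ O
      · refine ⟨l ++ [a], hhead, hch, rfl, ?_⟩
        have hfil : obsSym O (l ++ [a]) = obsSym O l ++ [a] := by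
          simp [obsSym, List.filter_append, ha]
        rw [hfil] at hpath
        simp only [pathOf, List.getLast?_concat] at hpath ⊢
        exact hpath
      · have hfil : obsSym O (l ++ [a]) = obsSym O l := by
          simp [obsSym, List.filter_append, ha]
        rcases l.eq_nil_or_concat' with rfl | ⟨l', b, rfl⟩
        · simp only [List.nil_append, List.head?_cons, Option.some.injEq] at hhead
          subst hhead
          exact ⟨[initSym m₀ G], rfl, List.isChain_singleton _, rfl, trivial⟩
        · have hl : (l' ++ [b]).head? = some (initSym m₀ G) := by
            rcases l' with - | ⟨c, l''⟩
            · simpa using hhead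
            · simpa using hhead
          have hch1 : (l' ++ [b]).Chain' G.SymStep :=
            (List.isChain_append.mp hch).1
          rw [hfil] at hpath
          obtain ⟨τ', h1, h2, h3, h4⟩ := ih hl hch1 hpath
          exact ⟨τ', h1, h2, h3.trans hfil.symm, h4⟩

private lemma head?_append_concat {α : Type} (l : List α) (b a : α) :
    ((l ++ [b]) ++ [a]).head? = (l ++ [b]).head? := by
  rcases l with - | ⟨c, l⟩ <;> simp

private lemma supp_mk (b : SymState Val X L) (hb : Supp b.ctr b) (G : ProgramGraph Val X L)
    (loc : L) (x : X) (g : (ℕ → Val) → Val) (c : ℕ) (hbc : b.ctr ≤ c)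
    (hg : ∀ ρ₁ ρ₂ : ℕ → Val, (∀ n < c, ρ₁ n = ρ₂ n) → g ρ₁ = g ρ₂) :
    Supp c ⟨loc, fun ρ' => b.path ρ' ∧ G.guard b.loc loc fun y => b.smem y ρ',
      Function.update b.smem x g, c⟩ := by
  intro ρ₁ ρ₂ hag
  have hag' : ∀ n < b.ctr, ρ₁ n = ρ₂ n := fun n hn => hag n (lt_of_lt_of_le hn hbc)
  obtain ⟨hm, hpth⟩ := hb ρ₁ ρ₂ hag'
  have hsm : (fun y => b.smem y ρ₁) = fun y => b.smem y ρ₂ := funext hm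
  constructor
  · intro y
    show Function.update b.smem x g y ρ₁ = Function.update b.smem x g y ρ₂
    by_cases hy : y = x
    · subst hy
      simp only [Function.update, dite_true, eq_self_iff_true]
      exact hg ρ₁ ρ₂ hag
    · simp only [Function.update, hy, dite_false]
      exact hm y
  · show (b.path ρ₁ ∧ _) ↔ (b.path ρ₂ ∧ _)
    rw [hpth, hsm]

private lemma complete (m₀ : X → Val) (G : ProgramGraph Val X L) [Nonempty Val] :
    ∀ τ : List (State Val X L), τ.head? = some (G.init, m₀) → τ.Chain' G.Step →
    ∃ (τh : List (SymState Val X L)) (ρ : ℕ → Val),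
      τh.head? = some (initSym m₀ G) ∧ τh.Chain' G.SymStep ∧ pathOf τh ρ ∧
      conc ρ τh = τ ∧ (∀ s ∈ τh, Supp s.ctr s ∧ s.ctr ≤ ctrOf τh) := by
  intro τ
  induction τ using List.reverseRecOn with
  | nil => intro h; simp at h
  | append_singleton l s' ih =>
      intro hhead hch
      rcases l.eq_nil_or_concat' with rfl | ⟨l', p, rfl⟩
      · -- singleton trace
        simp only [List.nil_append, List.head?_cons, Option.some.injEq] at hhead
        subst hhead
        refine ⟨[initSym m₀ G], Classical.arbitrary _, rfl, List.isChain_singleton _,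
          trivial, ?_, ?_⟩
        · simp [conc, initSym]
        · intro s hs
          simp only [List.mem_singleton] at hs
          subst hs
          exact ⟨fun ρ₁ ρ₂ _ => ⟨fun x => rfl, Iff.rfl⟩, le_refl _⟩
      · unfold List.Chain' at hch; rw [List.isChain_append] at hch
        obtain ⟨hch1, -, hlink⟩ := hch
        have hstep : G.Step p s' := hlink p (by simp [List.getLast?_concat]) s' (by simp)
        have hhead1 : (l' ++ [p]).head? = some (G.init, m₀) := by
          rcases l' with - | ⟨c, l''⟩ <;> simpa using hhead
        obtain ⟨τh, ρ, hh, hc, hp, hconc, hsupp⟩ := ih hhead1 hch1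
        rcases τh.eq_nil_or_concat' with rfl | ⟨u, b, rfl⟩
        · simp at hh
        have hctr : ctrOf (u ++ [b]) = b.ctr := by
          simp [ctrOf, List.getLast?_concat]
        have hpb : ((b.loc, fun x => b.smem x ρ) : State Val X L) = p := by
          have := congrArg List.getLast? hconc
          simpa [conc, List.getLast?_concat] using this
        have hbpath : b.path ρ := by
          simpa [pathOf, List.getLast?_concat] using hp
        subst hpb
        have hsuppb : Supp b.ctr b := by
          have := hsupp b (by simp)
          exact this.1
        have hedge : G.edges b.loc s'.1 := hstep.1
        have hguard : G.guard b.loc s'.1 fun x => b.smem x ρ := hstep.2.1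
        have hexec := hstep.2.2
        cases heff : G.effect b.loc s'.1 with
        | assign x e =>
          rw [heff] at hexec
          -- hexec : s'.2 = Function.update (fun x => b.smem x ρ) x (e fun x => b.smem x ρ)
          refine ⟨(u ++ [b]) ++ [⟨s'.1,
              fun ρ' => b.path ρ' ∧ G.guard b.loc s'.1 fun y => b.smem y ρ',
              Function.update b.smem x fun ρ' => e fun y => b.smem y ρ', b.ctr⟩], ρ,
            ?_, ?_, ?_, ?_, ?_⟩
          · rw [head?_append_concat]; exact hh
          · unfold List.Chain'; rw [List.isChain_append]
            refine ⟨hc, List.isChain_singleton _, ?_⟩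
            intro xx hxx yy hyy
            simp only [List.getLast?_concat, List.head?_cons, Option.mem_def,
              Option.some.injEq] at hxx hyy
            subst hxx; subst hyy
            refine ⟨hedge, rfl, ⟨ρ, hbpath, hguard⟩, ?_⟩
            rw [heff]
            exact ⟨rfl, rfl⟩
          · simp only [pathOf, List.getLast?_concat]
            exact ⟨hbpath, hguard⟩
          · rw [conc_append, hconc]
            congr 1
            show [(s'.1, fun y =>
              (Function.update b.smem x fun ρ' => e fun y => b.smem y ρ') y ρ)] = [s']
            rw [update_pt, ← hexec]
          · intro s hs
            rw [List.mem_append, List.mem_singleton] at hs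
            have hctr' : ctrOf ((u ++ [b]) ++ [⟨s'.1,
                fun ρ' => b.path ρ' ∧ G.guard b.loc s'.1 fun y => b.smem y ρ',
                Function.update b.smem x fun ρ' => e fun y => b.smem y ρ', b.ctr⟩])
                = b.ctr := by
              simp [ctrOf, List.getLast?_concat]
            rw [hctr']
            rcases hs with hs | rfl
            · exact ⟨(hsupp s hs).1, le_trans (hsupp s hs).2 (le_of_eq hctr)⟩
            · refine ⟨supp_mk b hsuppb G s'.1 x _ b.ctr le_rfl ?_, le_rfl⟩
              intro ρ₁ ρ₂ hag
              have hsm : (fun y => b.smem y ρ₁) = fun y => b.smem y ρ₂ :=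
                funext (hsuppb ρ₁ ρ₂ hag).1
              rw [hsm]
        | havoc x =>
          rw [heff] at hexec
          obtain ⟨v, hv⟩ := hexec
          set ρ' := Function.update ρ b.ctr v with hρ'
          have hag : ∀ n < b.ctr, ρ n = ρ' n := by
            intro n hn
            simp [hρ', Function.update, Nat.ne_of_lt hn]
          have hsm : (fun y => b.smem y ρ') = fun y => b.smem y ρ :=
            funext fun y => ((hsuppb ρ ρ' hag).1 y).symm
          have hbpath' : b.path ρ' := (hsuppb ρ ρ' hag).2.mp hbpath
          have hguard' : G.guard b.loc s'.1 fun y => b.smem y ρ' := by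
            rw [hsm]; exact hguard
          have hconceq : conc ρ' (u ++ [b]) = conc ρ (u ++ [b]) := by
            apply List.map_congr_left
            intro s hs
            have hsuppc := hsupp s hs
            have hags : ∀ n < s.ctr, ρ n = ρ' n := fun n hn =>
              hag n (lt_of_lt_of_le hn (hctr ▸ hsuppc.2))
            have := (hsuppc.1 ρ ρ' hags).1
            simp only [Prod.mk.injEq, true_and]
            exact funext fun y => (this y).symm
          refine ⟨(u ++ [b]) ++ [⟨s'.1,
              fun ρ'' => b.path ρ'' ∧ G.guard b.loc s'.1 fun y => b.smem y ρ'',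
              Function.update b.smem x fun ρ'' => ρ'' b.ctr, b.ctr + 1⟩], ρ',
            ?_, ?_, ?_, ?_, ?_⟩
          · rw [head?_append_concat]; exact hh
          · unfold List.Chain'; rw [List.isChain_append]
            refine ⟨hc, List.isChain_singleton _, ?_⟩
            intro xx hxx yy hyy
            simp only [List.getLast?_concat, List.head?_cons, Option.mem_def,
              Option.some.injEq] at hxx hyy
            subst hxx; subst hyy
            refine ⟨hedge, rfl, ⟨ρ', hbpath', hguard'⟩, ?_⟩
            rw [heff]
            exact ⟨rfl, rfl⟩
          · simp only [pathOf, List.getLast?_concat]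
            exact ⟨hbpath', hguard'⟩
          · rw [conc_append, hconceq, hconc]
            congr 1
            show [(s'.1, fun y =>
              (Function.update b.smem x fun ρ'' => ρ'' b.ctr) y ρ')] = [s']
            rw [update_pt, hsm]
            have hvv : ρ' b.ctr = v := by simp [hρ', Function.update]
            rw [hvv, ← hv]
          · intro s hs
            rw [List.mem_append, List.mem_singleton] at hs
            have hctr' : ctrOf ((u ++ [b]) ++ [⟨s'.1,
                fun ρ'' => b.path ρ'' ∧ G.guard b.loc s'.1 fun y => b.smem y ρ'',
                Function.update b.smem x fun ρ'' => ρ'' b.ctr, b.ctr + 1⟩])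
                = b.ctr + 1 := by
              simp [ctrOf, List.getLast?_concat]
            rw [hctr']
            rcases hs with hs | rfl
            · exact ⟨(hsupp s hs).1,
                le_trans (le_trans (hsupp s hs).2 (le_of_eq hctr)) (Nat.le_succ _)⟩
            · refine ⟨supp_mk b hsuppb G s'.1 x _ (b.ctr + 1) (Nat.le_succ _) ?_, le_rfl⟩
              intro ρ₁ ρ₂ hagg
              exact hagg b.ctr (Nat.lt_succ_self _)

end Aux

/-- Equivalence of symbolic and concrete trace semantics with
observations: `γ(SymTraces^k_O(G)) = Traces^k_O(G)`. -/
theorem conc_symTracesKO_eq_tracesKO {Val X L : Type}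
    (m₀ : X → Val) (G : ProgramGraph Val X L) (O : Set L) (k : ℕ) :
    concSet (SymTracesKO m₀ G O k) = TracesKO m₀ G O k := by
  haveI : Nonempty Val := by
    cases h : G.effect G.init G.init with
    | assign x e => exact ⟨m₀ x⟩
    | havoc x => exact ⟨m₀ x⟩
  ext t
  constructor
  · rintro ⟨th, ⟨⟨τ, ⟨hhead, hch⟩, rfl⟩, hlen⟩, ρ, hpath, rfl⟩
    obtain ⟨τ', h1, h2, h3, h4⟩ := truncate G m₀ O ρ τ hhead hch hpath
    have hsound := sound_chain G ρ τ' h2 h4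
    refine ⟨⟨conc ρ τ', ⟨?_, hsound.1⟩, ?_⟩, ?_⟩
    · show (List.map _ τ').head? = _
      rw [List.head?_map, h1]
      rfl
    · rw [obs_conc, h3]
    · rw [conc_length]
      exact hlen
  · rintro ⟨⟨τ, ⟨hhead, hch⟩, rfl⟩, hlen⟩
    obtain ⟨τh, ρ, hh, hc, hp, hconc, -⟩ := complete m₀ G τ hhead hch
    have hall := (sound_chain G ρ τh hc hp).2
    refine ⟨obsSym O τh, ⟨⟨τh, ⟨hh, hc⟩, rfl⟩, ?_⟩, ρ, ?_, ?_⟩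
    · have h5 : conc ρ (obsSym O τh) = obs O τ := by rw [← obs_conc, hconc]
      have hl := congrArg List.length h5
      rw [conc_length] at hl
      rw [hl]; exact hlen
    · cases hgl : (obsSym O τh).getLast? with
      | none => simp [pathOf, hgl]
      | some s =>
        have hmem : s ∈ obsSym O τh := by
          obtain ⟨h', rfl⟩ := List.mem_getLast?_eq_getLast hgl
          exact List.getLast_mem h'
        have hs : s.path ρ := hall s (List.mem_of_mem_filter hmem)
        simpa [pathOf, hgl] using hs
    · rw [← obs_conc, hconc]

end HyperSE
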